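/- arXiv:2406.14453 — 6 statements merged into one kernel-verified Lean document; each statement's English description precedes it below -/
import Mathlib

section
/- For the histogramming kernel applied to a sample x_1,…,x_n, the empirical effective degrees of freedom ν̂ = (1/n) ∑_{i=1}^n ∫ K(x_i,y)²/f̂(y) dy − 1 equals m̂ − 1, where m̂ is the number of non-empty bins and f̂(y) = (1/n) ∑_{i=1}^n K(x_i,y). -/
open MeasureTheory

/-- Histogramming kernel `K(x,y) = ∑_j 1{x ∈ B_j} 1{y ∈ B_j} / h_j` with bins
`B_j = [e j, e (j+1))`. -/
noncomputable def histKernel (m : ℕ) (e : ℕ → ℝ) (x y : ℝ) : ℝ :=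
  ∑ j ∈ Finset.range m,
    if x ∈ Set.Ico (e j) (e (j + 1)) ∧ y ∈ Set.Ico (e j) (e (j + 1)) then
      (e (j + 1) - e j)⁻¹ else 0

/-!
A sample point `x_i` lies in exactly one bin `B_j`, and `K(x_i, ·)` is the
indicator of `B_j` scaled by `1/h_j`, while `f̂ = n_j/(n h_j)` on `B_j`. Hence the `i`-th
integral is `h_j · (1/h_j)² / (n_j/(n h_j)) = n/n_j`, and summing `1/n_j` over the `n_j` points
of each nonempty bin contributes `1` per nonempty bin, so `(1/n) ∑_i n/n_{j(i)} = m̂`.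
-/

open Finset

theorem Finset.sum_inv_card_fiber_eq_card_image {ι κ K : Type*} [DecidableEq κ]
    [DivisionSemiring K] [CharZero K] (s : Finset ι) (g : ι → κ) :
    ∑ i ∈ s, (#{j ∈ s | g j = g i} : K)⁻¹ = #(s.image g) := by
  rw [card_eq_sum_ones, Nat.cast_sum, Nat.cast_one, eq_comm]
  refine sum_image' (f := fun _ => 1) _ fun i hi => ?_
  have hfiber : ∀ j ∈ {j ∈ s | g j = g i},
      (#{k ∈ s | g k = g j} : K)⁻¹ = (#{k ∈ s | g k = g i} : K)⁻¹ :=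
    fun j hj => by rw [(mem_filter.mp hj).2]
  have hne : (#{k ∈ s | g k = g i} : K) ≠ 0 :=
    Nat.cast_ne_zero.mpr (card_ne_zero_of_mem (mem_filter.mpr ⟨hi, rfl⟩))
  rw [sum_congr rfl hfiber, sum_const, nsmul_eq_mul, mul_inv_cancel₀ hne]

theorem MonotoneOn.eq_of_mem_Ico_succ {α : Type*} [LinearOrder α] {e : ℕ → α} {m j k : ℕ}
    {y : α} (he : MonotoneOn e (Set.Iic m)) (hj : j ≤ m) (hk : k ≤ m)
    (hyj : y ∈ Set.Ico (e j) (e (j + 1))) (hyk : y ∈ Set.Ico (e k) (e (k + 1))) : j = k := by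
  by_contra hne
  wlog hlt : j < k generalizing j k
  · exact this hk hj hyk hyj (Ne.symm hne) (by omega)
  exact (hyj.2.trans_le (he (by simp only [Set.mem_Iic]; omega) hk hlt)).not_ge hyk.1

theorem histKernel_comm (m : ℕ) (e : ℕ → ℝ) (x y : ℝ) :
    histKernel m e x y = histKernel m e y x := by
  simp only [histKernel, and_comm]

section

variable {m j : ℕ} {e : ℕ → ℝ}

theorem histKernel_eq_indicator (he : MonotoneOn e (Set.Iic m)) (hj : j < m) {x : ℝ}
    (hx : x ∈ Set.Ico (e j) (e (j + 1))) :
    histKernel m e x = (Set.Ico (e j) (e (j + 1))).indicator fun _ => (e (j + 1) - e j)⁻¹ := by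
  funext y
  rw [histKernel, sum_eq_single_of_mem j (mem_range.mpr hj)]
  · simp only [hx, true_and, Set.indicator_apply]
  · intro k hk hkj
    have hxk : x ∉ Set.Ico (e k) (e (k + 1)) := fun hxk =>
      hkj (he.eq_of_mem_Ico_succ (mem_range.mp hk).le hj.le hxk hx)
    simp only [hxk, false_and, if_false]

theorem sum_histKernel_of_mem {ι : Type*} [Fintype ι] (he : MonotoneOn e (Set.Iic m))
    (hj : j < m) (x : ι → ℝ) {y : ℝ} (hy : y ∈ Set.Ico (e j) (e (j + 1))) :
    ∑ i, histKernel m e (x i) y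
      = #{i | x i ∈ Set.Ico (e j) (e (j + 1))} * (e (j + 1) - e j)⁻¹ := by
  simp only [histKernel_comm _ _ (x _), histKernel_eq_indicator he hj hy, Set.indicator_apply,
    sum_ite, sum_const, nsmul_eq_mul, mul_zero, add_zero]

theorem integral_histKernel_sq_div {ι : Type*} [Fintype ι] (he : MonotoneOn e (Set.Iic m))
    (hj : j < m) {x₀ : ℝ} (hx₀ : x₀ ∈ Set.Ico (e j) (e (j + 1))) (c : ℝ) (x : ι → ℝ) :
    ∫ y, histKernel m e x₀ y ^ 2 / (c * ∑ i, histKernel m e (x i) y)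
      = (c * #{i | x i ∈ Set.Ico (e j) (e (j + 1))})⁻¹ := by
  have hh : e j < e (j + 1) := hx₀.1.trans_lt hx₀.2
  have hintegrand : (fun y => histKernel m e x₀ y ^ 2 / (c * ∑ i, histKernel m e (x i) y))
      = (Set.Ico (e j) (e (j + 1))).indicator
          fun _ => (e (j + 1) - e j)⁻¹ / (c * #{i | x i ∈ Set.Ico (e j) (e (j + 1))}) := by
    funext y
    by_cases hy : y ∈ Set.Ico (e j) (e (j + 1))
    · rw [sum_histKernel_of_mem he hj x hy, histKernel_eq_indicator he hj hx₀,
        Set.indicator_of_mem hy, Set.indicator_of_mem hy]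
      have : e (j + 1) - e j ≠ 0 := (sub_pos.mpr hh).ne'
      field_simp
    · simp [histKernel_eq_indicator he hj hx₀, hy]
  rw [hintegrand, integral_indicator_const _ measurableSet_Ico, Real.volume_real_Ico_of_le hh.le,
    smul_eq_mul, div_eq_mul_inv, ← mul_assoc, mul_inv_cancel₀ (sub_pos.mpr hh).ne', one_mul]

end

theorem histogram_empirical_edof_general (a b : ℝ) (m : ℕ) (e : ℕ → ℝ)
    (ha : e 0 = a) (hb : e m = b) (hmono : ∀ j < m, e j < e (j + 1))
    (n : ℕ) (x : Fin n → ℝ) (hx : ∀ i, x i ∈ Set.Ico a b) :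
    (1 / (n : ℝ)) * (∑ i, ∫ y : ℝ,
        (histKernel m e (x i) y) ^ 2
          / ((1 / (n : ℝ)) * ∑ i', histKernel m e (x i') y)) - 1
      = (((Finset.range m).filter
          (fun j => ∃ i, x i ∈ Set.Ico (e j) (e (j + 1)))).card : ℝ) - 1 := by
  classical
  subst ha hb
  have he : MonotoneOn e (Set.Iic m) :=
    (strictMonoOn_Iic_of_lt_succ fun j hj => by
      simpa only [Order.succ_eq_add_one] using hmono j hj).monotoneOn
  have hcover : ∀ i, ∃ j < m, x i ∈ Set.Ico (e j) (e (j + 1)) := fun i => by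
    simpa only [Set.mem_iUnion, exists_prop, mem_range] using Ico_subset_biUnion_Ico m e (hx i)
  choose J hJm hJ using hcover
  have hbin : ∀ i i', x i' ∈ Set.Ico (e (J i)) (e (J i + 1)) ↔ J i' = J i := fun i i' =>
    ⟨fun h => he.eq_of_mem_Ico_succ (hJm i').le (hJm i).le (hJ i') h,
      fun h => h ▸ hJ i'⟩
  have himage :
      (range m).filter (fun j => ∃ i, x i ∈ Set.Ico (e j) (e (j + 1))) = univ.image J := by
    ext j
    simp only [mem_filter, mem_range, mem_image, mem_univ, true_and]
    constructor
    · rintro ⟨hj, i, hi⟩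
      exact ⟨i, he.eq_of_mem_Ico_succ (hJm i).le hj.le (hJ i) hi⟩
    · rintro ⟨i, rfl⟩
      exact ⟨hJm i, i, hJ i⟩
  rw [himage, ← sum_inv_card_fiber_eq_card_image, mul_sum]
  congr 1
  refine sum_congr rfl fun i _ => ?_
  have hn : (n : ℝ) ≠ 0 := Nat.cast_ne_zero.mpr i.pos.ne'
  rw [integral_histKernel_sq_div he (hJm i) (hJ i)]
  simp only [hbin]
  field_simp

theorem histogram_empirical_edof (a b : ℝ) (m : ℕ) (hm : 0 < m) (e : ℕ → ℝ)
    (ha : e 0 = a) (hb : e m = b) (hmono : ∀ j < m, e j < e (j + 1))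
    (n : ℕ) (hn : 0 < n) (x : Fin n → ℝ) (hx : ∀ i, x i ∈ Set.Ico a b) :
    (1 / (n : ℝ)) * (∑ i, ∫ y : ℝ,
        (histKernel m e (x i) y) ^ 2
          / ((1 / (n : ℝ)) * ∑ i', histKernel m e (x i') y)) - 1
      = (((Finset.range m).filter
          (fun j => ∃ i, x i ∈ Set.Ico (e j) (e (j + 1)))).card : ℝ) - 1 :=
  histogram_empirical_edof_general a b m e ha hb hmono n x hx
end

section
/- For the histogramming kernel, the McCloud–Parmeter empirical EDoF ν̂₃ = (1/n) ∑_{i=1}^n K(x_i, x_i)/f̂(x_i) equals the number of non-empty bins m̂. -/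
open MeasureTheory

theorem histogram_mccloud_parmeter_edof (a b : ℝ) (m : ℕ) (hm : 0 < m) (e : ℕ → ℝ)
    (ha : e 0 = a) (hb : e m = b) (hmono : ∀ j < m, e j < e (j + 1))
    (n : ℕ) (hn : 0 < n) (x : Fin n → ℝ) (hx : ∀ i, x i ∈ Set.Ico a b) :
    (1 / (n : ℝ)) * ∑ i, histKernel m e (x i) (x i)
        / ((1 / (n : ℝ)) * ∑ i', histKernel m e (x i') (x i))
      = (((Finset.range m).filter
          (fun j => ∃ i, x i ∈ Set.Ico (e j) (e (j + 1)))).card : ℝ) := by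
  classical
  -- monotonicity of e on [0, m]
  have hmono' : ∀ j k, j ≤ k → k ≤ m → e j ≤ e k := by
    intro j k hjk hkm
    induction k with
    | zero => simp_all
    | succ k ih =>
      rcases Nat.lt_or_ge j (k + 1) with h | h
      · exact le_trans (ih (Nat.lt_succ_iff.mp h) (by omega))
          (le_of_lt (hmono k (by omega)))
      · have : j = k + 1 := le_antisymm hjk h
        subst this; rfl
  -- each point is in some bin
  have hexists : ∀ i, ∃ j, j < m ∧ x i ∈ Set.Ico (e j) (e (j + 1)) := by
    intro i
    obtain ⟨hxa, hxb⟩ := hx i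
    have h0 : e 0 ≤ x i := by rw [ha]; exact hxa
    have hne : ((Finset.range m).filter (fun j => e j ≤ x i)).Nonempty :=
      ⟨0, by simp [hm, h0]⟩
    set j := ((Finset.range m).filter (fun j => e j ≤ x i)).max' hne with hj
    have hmem := Finset.max'_mem _ hne
    rw [Finset.mem_filter, Finset.mem_range] at hmem
    refine ⟨j, hmem.1, hmem.2, ?_⟩
    by_contra hlt
    push_neg at hlt
    rcases Nat.lt_or_ge (j + 1) m with h | h
    · have hjs : j + 1 ∈ (Finset.range m).filter (fun j => e j ≤ x i) := by
        simp [h, hlt]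
      have := Finset.le_max' _ _ hjs
      omega
    · have hj1m : j + 1 = m := by omega
      have : e m ≤ x i := by rw [← hj1m]; exact hlt
      rw [hb] at this; linarith
  choose bin hbinlt hbinmem using hexists
  -- uniqueness of the bin
  have huniq : ∀ i j, j < m → x i ∈ Set.Ico (e j) (e (j + 1)) → j = bin i := by
    intro i j hjm hmemj
    by_contra hne
    rcases Nat.lt_or_ge j (bin i) with h | h
    · have h1 : e (j + 1) ≤ e (bin i) := hmono' _ _ h (le_of_lt (hbinlt i))
      have h2 := (hbinmem i).1
      have h3 := hmemj.2
      linarith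
    · have h' : bin i < j := by omega
      have h1 : e (bin i + 1) ≤ e j := hmono' _ _ h' (le_of_lt hjm)
      have h2 := hmemj.1
      have h3 := (hbinmem i).2
      linarith
  have hpos : ∀ i, 0 < e (bin i + 1) - e (bin i) := fun i =>
    sub_pos.mpr (hmono _ (hbinlt i))
  -- kernel evaluation
  have hker : ∀ i i', histKernel m e (x i') (x i)
      = if bin i' = bin i then (e (bin i + 1) - e (bin i))⁻¹ else 0 := by
    intro i i'
    unfold histKernel
    rw [Finset.sum_eq_single (bin i)]
    · by_cases hbb : bin i' = bin i
      · rw [if_pos ⟨hbb ▸ hbinmem i', hbinmem i⟩, if_pos hbb]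
      · rw [if_neg, if_neg hbb]
        rintro ⟨h1, -⟩
        exact hbb ((huniq i' (bin i) (hbinlt i) h1).symm)
    · intro j hj hne
      rw [Finset.mem_range] at hj
      rw [if_neg]
      rintro ⟨-, h2⟩
      exact hne (huniq i j hj h2)
    · intro h
      exact absurd (Finset.mem_range.mpr (hbinlt i)) h
  -- counts
  set N : ℕ → ℕ := fun j => (Finset.univ.filter (fun i' => bin i' = j)).card with hN
  have hNpos : ∀ i, 0 < N (bin i) := by
    intro i
    apply Finset.card_pos.mpr
    exact ⟨i, by simp⟩
  have hsum : ∀ i, ∑ i', histKernel m e (x i') (x i)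
      = (N (bin i) : ℝ) * (e (bin i + 1) - e (bin i))⁻¹ := by
    intro i
    simp only [hker]
    rw [← Finset.sum_filter, Finset.sum_const, nsmul_eq_mul]
  -- each summand
  have hterm : ∀ i, histKernel m e (x i) (x i)
      / ((1 / (n : ℝ)) * ∑ i', histKernel m e (x i') (x i))
      = (n : ℝ) / (N (bin i)) := by
    intro i
    rw [hsum i, hker i i, if_pos rfl]
    set c := e (bin i + 1) - e (bin i) with hc
    have h1 : c ≠ 0 := ne_of_gt (hpos i)
    have h2 : (N (bin i) : ℝ) ≠ 0 := Nat.cast_ne_zero.mpr (hNpos i).ne'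
    have h3 : (n : ℝ) ≠ 0 := Nat.cast_ne_zero.mpr hn.ne'
    field_simp
  rw [Finset.sum_congr rfl (fun i _ => hterm i), Finset.mul_sum]
  have h3 : (n : ℝ) ≠ 0 := Nat.cast_ne_zero.mpr hn.ne'
  have hstep : ∀ i : Fin n, (1 / (n : ℝ)) * ((n : ℝ) / (N (bin i)))
      = (N (bin i) : ℝ)⁻¹ := by
    intro i
    field_simp
  rw [Finset.sum_congr rfl (fun i _ => hstep i)]
  -- fiberwise summation over the image
  have himg : Finset.univ.image bin
      = (Finset.range m).filter (fun j => ∃ i, x i ∈ Set.Ico (e j) (e (j + 1))) := by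
    ext j
    simp only [Finset.mem_image, Finset.mem_filter, Finset.mem_range, Finset.mem_univ,
      true_and]
    constructor
    · rintro ⟨i, rfl⟩
      exact ⟨hbinlt i, i, hbinmem i⟩
    · rintro ⟨hjm, i, hmem⟩
      exact ⟨i, (huniq i j hjm hmem).symm⟩
  rw [← himg]
  rw [← Finset.sum_fiberwise_of_maps_to (g := bin) (t := Finset.univ.image bin)
    (fun i _ => Finset.mem_image_of_mem bin (Finset.mem_univ i))]
  rw [Finset.card_eq_sum_ones, Nat.cast_sum]
  apply Finset.sum_congr rfl
  intro j hj
  obtain ⟨i0, -, rfl⟩ := Finset.mem_image.mp hj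
  have : ∀ i' ∈ Finset.univ.filter (fun i' => bin i' = bin i0),
      ((N (bin i')) : ℝ)⁻¹ = ((N (bin i0)) : ℝ)⁻¹ := by
    intro i' hi'
    rw [(Finset.mem_filter.mp hi').2]
  rw [Finset.sum_congr rfl this, Finset.sum_const, nsmul_eq_mul]
  have h2 : (N (bin i0) : ℝ) ≠ 0 := Nat.cast_ne_zero.mpr (hNpos i0).ne'
  rw [show (Finset.univ.filter (fun i' => bin i' = bin i0)).card = N (bin i0) from rfl,
    mul_inv_cancel₀ h2, Nat.cast_one]
end

section
/- In the all-Gaussian case, the extended asymptotic variance satisfies V(r) + BV(r) = (1/(2n)) ( (1+r²)²/(r² √((2+r²)² − 1)) − 1 ), where V(r) + BV(r) = (1/(2n)) ∑_{k=1}^∞ (1+r²)^{-2k} k! ∑_{j=0}^{⌊k/2⌋} r^{4j}/(2^{2j} (k−2j)! (j!)²). -/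
/-!
With `t = (1 + r²)⁻²` and `a = r⁴ / 4`, the `k`-th term of the series is
`t ^ k * ∑ j, C(k, 2j) C(2j, j) a ^ j`. Writing `k = m + 2j` and summing over `m` first (a negative
binomial series) leaves `(1 - t)⁻¹ ∑ j, C(2j, j) z ^ j` with `z = a t² / (1 - t)²`. The generating
function of the central binomial coefficients is `(1 - 4z)^(-1/2)`, since its square is the
geometric series `∑ (4z)ⁿ` by the convolution identity `∑ᵢ C(2i, i) C(2(n-i), n-i) = 4ⁿ`.
The `- 1` is the `k = 0` term.
-/

open Finset
open Nat (centralBinom choose_eq_zero_of_lt)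
open scoped Nat

namespace Nat

theorem two_mul_sum_antidiagonal_fst_mul_centralBinom_mul (n : ℕ) :
    2 * ∑ p ∈ antidiagonal n, p.1 * (centralBinom p.1 * centralBinom p.2)
      = n * ∑ p ∈ antidiagonal n, centralBinom p.1 * centralBinom p.2 := by
  have swap : ∑ p ∈ antidiagonal n, p.1 * (centralBinom p.1 * centralBinom p.2)
      = ∑ p ∈ antidiagonal n, p.2 * (centralBinom p.1 * centralBinom p.2) := by
    rw [← Finset.Nat.sum_antidiagonal_swap]
    exact sum_congr rfl fun p _ => by simp only [Prod.fst_swap, Prod.snd_swap]; ring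
  rw [two_mul]
  nth_rewrite 2 [swap]
  rw [← sum_add_distrib, mul_sum]
  refine sum_congr rfl fun p hp => ?_
  rw [← add_mul, mem_antidiagonal.mp hp]

theorem sum_antidiagonal_succ_fst_mul_centralBinom_mul (n : ℕ) :
    ∑ p ∈ antidiagonal (n + 1), p.1 * (centralBinom p.1 * centralBinom p.2)
      = 4 * ∑ p ∈ antidiagonal n, p.1 * (centralBinom p.1 * centralBinom p.2)
        + 2 * ∑ p ∈ antidiagonal n, centralBinom p.1 * centralBinom p.2 := by
  rw [Finset.Nat.sum_antidiagonal_succ, zero_mul, zero_add, mul_sum, mul_sum, ← sum_add_distrib]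
  refine sum_congr rfl fun p _ => ?_
  rw [← mul_assoc, succ_mul_centralBinom_succ]
  ring

theorem sum_antidiagonal_centralBinom_mul_centralBinom (n : ℕ) :
    ∑ p ∈ antidiagonal n, centralBinom p.1 * centralBinom p.2 = 4 ^ n := by
  induction n with
  | zero => simp
  | succ n ih =>
    apply Nat.eq_of_mul_eq_mul_left (by omega : 0 < n + 1)
    have h₁ := two_mul_sum_antidiagonal_fst_mul_centralBinom_mul n
    have h₂ := two_mul_sum_antidiagonal_fst_mul_centralBinom_mul (n + 1)
    rw [sum_antidiagonal_succ_fst_mul_centralBinom_mul, ih] at h₂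
    rw [ih] at h₁
    rw [← h₂, pow_succ]
    linear_combination 4 * h₁

theorem choose_mul_centralBinom_mul_factorial {j k : ℕ} (h : 2 * j ≤ k) :
    k.choose (2 * j) * centralBinom j * ((k - 2 * j)! * j ! ^ 2) = k ! := by
  have hc := choose_mul_factorial_mul_factorial h
  have hb := choose_mul_factorial_mul_factorial (show j ≤ 2 * j by omega)
  rw [show 2 * j - j = j by omega] at hb
  rw [← hc, ← hb, centralBinom]
  ring

end Nat

theorem factorial_mul_sum_div_factorial_eq_sum_choose_mul_centralBinom {K : Type*} [Field K]
    [CharZero K] (x : K) (k : ℕ) :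
    (k ! : K) * ∑ j ∈ range (k / 2 + 1), x ^ j / (((k - 2 * j)! : K) * (j ! : K) ^ 2)
      = ∑ j ∈ range (k / 2 + 1), (k.choose (2 * j) * centralBinom j : K) * x ^ j := by
  rw [Finset.mul_sum]
  refine Finset.sum_congr rfl fun j hj => ?_
  have hk : 2 * j ≤ k := by rw [mem_range] at hj; omega
  have h₁ : ((k - 2 * j)! : K) ≠ 0 := Nat.cast_ne_zero.mpr (Nat.factorial_ne_zero _)
  have h₂ : (j ! : K) ≠ 0 := Nat.cast_ne_zero.mpr (Nat.factorial_ne_zero _)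
  rw [← Nat.choose_mul_centralBinom_mul_factorial hk]
  push_cast
  field_simp

theorem HasSum.prod_of_nonneg {α β : Type*} {f : α × β → ℝ} (hf : 0 ≤ f) {g : α → ℝ} {a : ℝ}
    (hfg : ∀ x, HasSum (fun y => f (x, y)) (g x)) (hg : HasSum g a) : HasSum f a := by
  have hsum : Summable f :=
    (summable_prod_of_nonneg hf).2 ⟨fun x => (hfg x).summable,
      hg.summable.congr fun x => ((hfg x).tsum_eq).symm⟩
  rw [← hg.tsum_eq, ← tsum_congr fun x => (hfg x).tsum_eq,
    ← hsum.tsum_prod' fun x => (hfg x).summable]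
  exact hsum.hasSum

theorem summable_centralBinom_mul_pow {z : ℝ} (hz₀ : 0 ≤ z) (hz : 4 * z < 1) :
    Summable fun n => (centralBinom n : ℝ) * z ^ n := by
  refine .of_nonneg_of_le (fun n => by positivity) (fun n => ?_)
    (summable_geometric_of_lt_one (by positivity) hz)
  rw [mul_pow]
  gcongr
  exact_mod_cast Nat.centralBinom_le_four_pow n

theorem hasSum_centralBinom_mul_pow {z : ℝ} (hz₀ : 0 ≤ z) (hz : 4 * z < 1) :
    HasSum (fun n => (centralBinom n : ℝ) * z ^ n) (√(1 - 4 * z))⁻¹ := by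
  have hs := summable_centralBinom_mul_pow hz₀ hz
  set S := ∑' n, (centralBinom n : ℝ) * z ^ n
  have hsq : S * S = (1 - 4 * z)⁻¹ := by
    have hnorm : Summable fun n => ‖(centralBinom n : ℝ) * z ^ n‖ :=
      hs.congr fun n => (Real.norm_of_nonneg (by positivity)).symm
    rw [tsum_mul_tsum_eq_tsum_sum_antidiagonal_of_summable_norm hnorm hnorm,
      ← tsum_geometric_of_lt_one (by positivity) hz]
    refine tsum_congr fun m => ?_
    calc ∑ p ∈ antidiagonal m, centralBinom p.1 * z ^ p.1 * (centralBinom p.2 * z ^ p.2)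
        = (∑ p ∈ antidiagonal m, (centralBinom p.1 * centralBinom p.2 : ℕ)) * z ^ m := by
          rw [Nat.cast_sum, sum_mul]
          refine sum_congr rfl fun p hp => ?_
          rw [← mem_antidiagonal.mp hp, pow_add, Nat.cast_mul]
          ring
      _ = (4 * z) ^ m := by
          rw [Nat.sum_antidiagonal_centralBinom_mul_centralBinom, mul_pow]
          push_cast
          ring
  have hS : 0 ≤ S := tsum_nonneg fun n => by positivity
  rw [← Real.sqrt_inv, ← hsq, Real.sqrt_mul_self hS]
  exact hs.hasSum

theorem hasSum_choose_mul_pow_add {𝕜 : Type*} [NormedField 𝕜] [CompleteSpace 𝕜] {t : 𝕜}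
    (ht : ‖t‖ < 1) (k : ℕ) :
    HasSum (fun m => ((m + k).choose k : 𝕜) * t ^ (m + k)) (t ^ k / (1 - t) ^ (k + 1)) := by
  have hterm : ∀ m, ((m + k).choose k : 𝕜) * t ^ (m + k) = t ^ k * ((m + k).choose k * t ^ m) :=
    fun m => by ring
  rw [funext hterm, ← mul_one_div]
  exact (hasSum_choose_mul_geometric_of_norm_lt_one k ht).mul_left (t ^ k)

theorem HasSum.sum_range_half {α : Type*} [AddCommMonoid α] [TopologicalSpace α]
    [ContinuousAdd α] [RegularSpace α] {f : ℕ → ℕ → α} {s : α} (hf : ∀ k j, k < 2 * j → f k j = 0)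
    (h : HasSum (fun q : ℕ × ℕ => f (q.2 + 2 * q.1) q.1) s) :
    HasSum (fun k => ∑ j ∈ range (k / 2 + 1), f k j) s := by
  set e : ℕ × ℕ → ℕ × ℕ := fun q => (q.2 + 2 * q.1, q.1)
  have he : Function.Injective e := fun q q' hq => by
    simp only [e, Prod.mk.injEq] at hq
    ext <;> omega
  have hf_of_notMem : ∀ q ∉ Set.range e, f q.1 q.2 = 0 := by
    rintro ⟨k, j⟩ hq
    refine hf k j (not_le.mp fun hk => hq ⟨(j, k - 2 * j), ?_⟩)
    simp only [e]
    congr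
    omega
  refine ((he.hasSum_iff hf_of_notMem).mp h).prod_fiberwise fun k => ?_
  refine hasSum_sum_of_ne_finset_zero fun j hj => hf k j ?_
  rw [mem_range, not_lt] at hj
  omega

theorem hasSum_pow_mul_sum_choose_mul_centralBinom {t a : ℝ} (ht₀ : 0 ≤ t) (ht₁ : t < 1)
    (ha : 0 ≤ a) (h : 4 * a * t ^ 2 < (1 - t) ^ 2) :
    HasSum (fun k => t ^ k *
        ∑ j ∈ range (k / 2 + 1), (k.choose (2 * j) * centralBinom j : ℝ) * a ^ j)
      (√((1 - t) ^ 2 - 4 * a * t ^ 2))⁻¹ := by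
  have hu : 0 < 1 - t := by linarith
  set z := a * t ^ 2 / (1 - t) ^ 2
  have hz : 4 * z < 1 := by
    rwa [mul_div_assoc', ← mul_assoc, div_lt_one (by positivity)]
  have hsqrt : √((1 - t) ^ 2 - 4 * a * t ^ 2) = (1 - t) * √(1 - 4 * z) := by
    have : (1 - t) ^ 2 - 4 * a * t ^ 2 = (1 - t) ^ 2 * (1 - 4 * z) := by
      simp only [z]
      field_simp
    rw [this, Real.sqrt_mul (sq_nonneg _), Real.sqrt_sq hu.le]
  have ht : ‖t‖ < 1 := by rwa [Real.norm_of_nonneg ht₀]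
  have hinner : ∀ j, HasSum (fun m => centralBinom j * a ^ j *
      ((m + 2 * j).choose (2 * j) * t ^ (m + 2 * j))) ((1 - t)⁻¹ * (centralBinom j * z ^ j)) := by
    intro j
    have hval : (1 - t)⁻¹ * (centralBinom j * z ^ j)
        = centralBinom j * a ^ j * (t ^ (2 * j) / (1 - t) ^ (2 * j + 1)) := by
      simp only [z, div_pow, mul_pow, ← pow_mul]
      field_simp
      ring
    rw [hval]
    exact (hasSum_choose_mul_pow_add ht (2 * j)).mul_left _
  simp_rw [Finset.mul_sum]
  rw [hsqrt, mul_inv]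
  refine HasSum.sum_range_half (fun k j hk => by simp [choose_eq_zero_of_lt hk]) ?_
  refine .prod_of_nonneg (fun q => by positivity) (fun j => ?_)
    ((hasSum_centralBinom_mul_pow (by positivity) hz).mul_left _)
  convert hinner j using 2 with m
  ring

theorem hasSum_gaussian_series {r : ℝ} (hr : 0 < r) :
    HasSum (fun k : ℕ => ((1 + r ^ 2) ^ (2 * k))⁻¹ * (k ! : ℝ) *
        ∑ j ∈ range (k / 2 + 1), r ^ (4 * j) / (2 ^ (2 * j) * ((k - 2 * j)! : ℝ) * (j ! : ℝ) ^ 2))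
      ((1 + r ^ 2) ^ 2 / (r ^ 2 * √((2 + r ^ 2) ^ 2 - 1))) := by
  set t := ((1 + r ^ 2) ^ 2)⁻¹
  have ht₁ : t < 1 := inv_lt_one_of_one_lt₀ (by nlinarith [pow_pos hr 2])
  have hterm : ∀ k : ℕ, ((1 + r ^ 2) ^ (2 * k))⁻¹ * (k ! : ℝ) *
      ∑ j ∈ range (k / 2 + 1), r ^ (4 * j) / (2 ^ (2 * j) * ((k - 2 * j)! : ℝ) * (j ! : ℝ) ^ 2)
        = t ^ k * ∑ j ∈ range (k / 2 + 1),
            (k.choose (2 * j) * centralBinom j : ℝ) * (r ^ 4 / 4) ^ j := by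
    intro k
    have hsummand : ∀ j, r ^ (4 * j) / (2 ^ (2 * j) * ((k - 2 * j)! : ℝ) * (j ! : ℝ) ^ 2)
        = (r ^ 4 / 4) ^ j / (((k - 2 * j)! : ℝ) * (j ! : ℝ) ^ 2) := fun j => by
      rw [pow_mul, pow_mul, div_pow, mul_assoc, div_div]
      norm_num
    simp_rw [hsummand]
    rw [mul_assoc, factorial_mul_sum_div_factorial_eq_sum_choose_mul_centralBinom, pow_mul,
      ← inv_pow]
  have hval : (√((1 - t) ^ 2 - 4 * (r ^ 4 / 4) * t ^ 2))⁻¹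
      = (1 + r ^ 2) ^ 2 / (r ^ 2 * √((2 + r ^ 2) ^ 2 - 1)) := by
    have : (1 - t) ^ 2 - 4 * (r ^ 4 / 4) * t ^ 2
        = (r ^ 2 / (1 + r ^ 2) ^ 2) ^ 2 * ((2 + r ^ 2) ^ 2 - 1) := by
      simp only [t]
      field_simp
      ring
    rw [this, Real.sqrt_mul (sq_nonneg _), Real.sqrt_sq (by positivity)]
    field_simp
  rw [funext hterm, ← hval]
  refine hasSum_pow_mul_sum_choose_mul_centralBinom (by positivity) ht₁ (by positivity) ?_
  have h1t : 1 - t = r ^ 2 * (2 + r ^ 2) * t := by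
    simp only [t]
    field_simp
    ring
  rw [h1t]
  nlinarith [show 0 < r ^ 4 * t ^ 2 * ((1 + r ^ 2) * (3 + r ^ 2)) by positivity]

theorem gaussian_extended_asymptotic_variance_general (r : ℝ) (hr : 0 < r) (n : ℕ) :
    (1 / (2 * (n : ℝ))) * ∑' k : ℕ,
        ((1 + r ^ 2) ^ (2 * (k + 1)))⁻¹ * (Nat.factorial (k + 1) : ℝ) *
          ∑ j ∈ Finset.range ((k + 1) / 2 + 1),
            r ^ (4 * j) /
              (2 ^ (2 * j) * (Nat.factorial (k + 1 - 2 * j) : ℝ) * (Nat.factorial j : ℝ) ^ 2)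
      = (1 / (2 * (n : ℝ))) *
          ((1 + r ^ 2) ^ 2 / (r ^ 2 * Real.sqrt ((2 + r ^ 2) ^ 2 - 1)) - 1) := by
  rw [((hasSum_nat_add_iff' 1).mpr (hasSum_gaussian_series hr)).tsum_eq]
  norm_num

theorem gaussian_extended_asymptotic_variance (r : ℝ) (hr : 0 < r) (n : ℕ) (hn : 0 < n) :
    (1 / (2 * (n : ℝ))) * ∑' k : ℕ,
        ((1 + r ^ 2) ^ (2 * (k + 1)))⁻¹ * (Nat.factorial (k + 1) : ℝ) *
          ∑ j ∈ Finset.range ((k + 1) / 2 + 1),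
            r ^ (4 * j) /
              (2 ^ (2 * j) * (Nat.factorial (k + 1 - 2 * j) : ℝ) * (Nat.factorial j : ℝ) ^ 2)
      = (1 / (2 * (n : ℝ))) *
          ((1 + r ^ 2) ^ 2 / (r ^ 2 * Real.sqrt ((2 + r ^ 2) ^ 2 - 1)) - 1) :=
  gaussian_extended_asymptotic_variance_general r hr n
end

section
/- For j ≥ 1 and r > 0, the series T_j(r) = ∑_{k=2j}^∞ (1+r²)^{-2k} k! · r^{4j}/(2^{2j}(k−2j)!(j!)²) equals (1+r²)²/(r²(2+r²)^{2j+1}) · (2j)!/(2^{2j}(j!)²). -/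
theorem T_j_closed_form (j : ℕ) (hj : 0 < j) (r : ℝ) (hr : 0 < r) :
    ∑' i : ℕ,
        ((1 + r ^ 2) ^ (2 * (2 * j + i)))⁻¹ *
          ((Nat.factorial (2 * j + i) : ℝ) / (Nat.factorial i : ℝ)) *
          (r ^ (4 * j) / (2 ^ (2 * j) * (Nat.factorial j : ℝ) ^ 2))
      = (1 + r ^ 2) ^ 2 / (r ^ 2 * (2 + r ^ 2) ^ (2 * j + 1)) *
          ((Nat.factorial (2 * j) : ℝ) / (2 ^ (2 * j) * (Nat.factorial j : ℝ) ^ 2)) := by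
  have h1 : (0:ℝ) < 1 + r ^ 2 := by positivity
  set x : ℝ := ((1 + r ^ 2) ^ 2)⁻¹ with hx
  have hxpos : 0 < x := by positivity
  have hx1 : ‖x‖ < 1 := by
    rw [Real.norm_eq_abs, abs_of_pos hxpos, hx, inv_lt_one_iff₀]
    right; nlinarith
  have hterm : ∀ i : ℕ, ((1 + r ^ 2) ^ (2 * (2 * j + i)))⁻¹ *
          ((Nat.factorial (2 * j + i) : ℝ) / (Nat.factorial i : ℝ)) *
          (r ^ (4 * j) / (2 ^ (2 * j) * (Nat.factorial j : ℝ) ^ 2))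
      = ((i + 2*j).choose (2*j) : ℝ) * x ^ i *
        ((Nat.factorial (2*j) : ℝ) * x ^ (2*j) *
          (r ^ (4 * j) / (2 ^ (2 * j) * (Nat.factorial j : ℝ) ^ 2))) := by
    intro i
    have hnat : (i + 2*j).choose (2*j) * (2*j).factorial * i.factorial
        = (2*j + i).factorial := by
      have := Nat.choose_mul_factorial_mul_factorial
        (show 2*j ≤ i + 2*j by omega) (n := i + 2*j)
      simpa [Nat.add_sub_cancel, Nat.add_comm] using this
    have hc : ((2*j+i).factorial : ℝ) / (i.factorial : ℝ)
        = ((i + 2*j).choose (2*j) : ℝ) * ((2*j).factorial : ℝ) := by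
      rw [div_eq_iff ((Nat.cast_pos.mpr (Nat.factorial_pos i)).ne' : (i.factorial:ℝ) ≠ 0)]
      push_cast [← hnat]
      ring
    have hpow : ((1 + r ^ 2) ^ (2 * (2 * j + i)))⁻¹ = x ^ i * x ^ (2*j) := by
      rw [hx]
      rw [show 2 * (2 * j + i) = 2 * i + 2 * (2*j) by ring, pow_add, pow_mul, pow_mul,
        mul_inv, inv_pow, inv_pow]
    rw [hc, hpow]
    ring
  rw [tsum_congr hterm, tsum_mul_right,
    tsum_choose_mul_geometric_of_norm_lt_one (2*j) hx1]
  have hx2 : 1 - x = (r^2 * (2+r^2)) / (1+r^2)^2 := by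
    rw [hx]
    field_simp
    ring
  rw [hx2]
  have h2 : (0:ℝ) < 2 + r^2 := by positivity
  rw [div_pow, one_div_div, hx]
  have e1 : (((1 + r ^ 2) ^ 2)⁻¹ : ℝ) ^ (2*j) = (((1 + r ^ 2) ^ 2) ^ (2*j))⁻¹ := by
    rw [inv_pow]
  have e3 : r ^ (4 * j) = (r ^ 2) ^ (2 * j) := by
    rw [← pow_mul]
    congr 1
    omega
  rw [e1, e3]
  have hne : (((1+r^2)^2)^(2*j) : ℝ) ≠ 0 := by positivity
  have hne2 : ((r^2*(2+r^2))^(2*j+1) : ℝ) ≠ 0 := by positivity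
  rw [mul_pow (r^2) (2+r^2)] at hne2 ⊢
  field_simp
  ring
end

section
/- Asymptotic behavior of the Gaussian AMKLD-optimal bandwidth: any positive solution r_* of n r⁶ (3 + r²) √(3 + 4r² + r⁴) = 3 (1 + r²)³ satisfies r_* → 0 as n → ∞, and moreover n^{1/6} r_* → 3^{-1/12} as n → ∞. -/
open Filter Real Topology

theorem amkld_optimal_bandwidth_asymptotics (r : ℕ → ℝ) (hr : ∀ n, 0 < r n)
    (heq : ∀ n : ℕ, 1 ≤ n →
      (n : ℝ) * r n ^ 6 * (3 + r n ^ 2) * Real.sqrt (3 + 4 * r n ^ 2 + r n ^ 4)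
        = 3 * (1 + r n ^ 2) ^ 3) :
    Filter.Tendsto r Filter.atTop (nhds 0) ∧
      Filter.Tendsto (fun n : ℕ => (n : ℝ) ^ ((1 : ℝ) / 6) * r n) Filter.atTop
        (nhds ((3 : ℝ) ^ (-(1 : ℝ) / 12))) := by
  -- sqrt lower bound
  have hsq : ∀ n : ℕ, (1 + r n ^ 2) ≤ Real.sqrt (3 + 4 * r n ^ 2 + r n ^ 4) := by
    intro n
    have h1 : (1 + r n ^ 2) ^ 2 ≤ 3 + 4 * r n ^ 2 + r n ^ 4 := by nlinarith [sq_nonneg (r n)]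
    have := Real.sqrt_le_sqrt h1
    rwa [Real.sqrt_sq (by positivity)] at this
  -- key bound
  have hb : ∀ n : ℕ, 1 ≤ n → (n : ℝ) * r n ^ 6 ≤ 3 * (1 + r n ^ 2) := by
    intro n hn
    have h := heq n hn
    have hrn := hr n
    have c1 : (n : ℝ) * r n ^ 6 * (1 + r n ^ 2) ^ 2
        ≤ (n : ℝ) * r n ^ 6 * ((3 + r n ^ 2) * Real.sqrt (3 + 4 * r n ^ 2 + r n ^ 4)) := by
      apply mul_le_mul_of_nonneg_left _ (by positivity)
      have h2 := hsq n
      calc (1 + r n ^ 2) ^ 2 = (1 + r n ^ 2) * (1 + r n ^ 2) := sq (1 + r n ^ 2)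
        _ ≤ (3 + r n ^ 2) * Real.sqrt (3 + 4 * r n ^ 2 + r n ^ 4) :=
          mul_le_mul (by nlinarith) h2 (by positivity) (by positivity)
    have hA : (n : ℝ) * r n ^ 6 * (1 + r n ^ 2) ^ 2
        ≤ 3 * (1 + r n ^ 2) * (1 + r n ^ 2) ^ 2 :=
      c1.trans_eq (by linear_combination h)
    exact le_of_mul_le_mul_right hA (by positivity)
  -- r n ^ 6 ≤ 6 / n for n ≥ 7
  have hb6 : ∀ n : ℕ, 7 ≤ n → r n ^ 6 ≤ 6 / (n : ℝ) := by
    intro n hn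
    have hB := hb n (by omega)
    have hn7 : (7 : ℝ) ≤ (n : ℝ) := by exact_mod_cast hn
    have hrn := hr n
    rcases le_or_gt (r n ^ 2) 1 with hc | hc
    · rw [le_div_iff₀ (by linarith)]
      nlinarith
    · exfalso
      have h1 : r n ^ 2 ≤ (r n ^ 2) ^ 3 := by
        nlinarith [mul_pos (pow_pos hrn 2) (sub_pos.mpr hc)]
      have h2 : (1 : ℝ) ≤ (r n ^ 2) ^ 3 := by
        have := pow_le_pow_left₀ (by norm_num : (0:ℝ) ≤ 1) hc.le 3
        simpa using this
      have h7 : 7 * (r n ^ 2) ^ 3 ≤ 3 * (1 + r n ^ 2) := by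
        nlinarith [mul_le_mul_of_nonneg_right hn7 (by positivity : (0:ℝ) ≤ r n ^ 6)]
      linarith
  -- r n ^ 6 → 0
  have h6 : Filter.Tendsto (fun n : ℕ => r n ^ 6) Filter.atTop (nhds 0) := by
    apply squeeze_zero' (Filter.Eventually.of_forall fun n => by positivity)
      (Filter.eventually_atTop.mpr ⟨7, hb6⟩)
    exact tendsto_const_div_atTop_nhds_zero_nat 6
  -- r n = (r n ^ 6) ^ (1/6)
  have hpow : ∀ n : ℕ, (r n ^ 6) ^ ((1 : ℝ) / 6) = r n := by
    intro n
    rw [← Real.rpow_natCast (r n) 6, ← Real.rpow_mul (hr n).le]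
    norm_num
  -- r → 0
  have hr0 : Filter.Tendsto r Filter.atTop (nhds 0) := by
    have hc : ContinuousAt (fun x : ℝ => x ^ ((1 : ℝ) / 6)) 0 :=
      Real.continuousAt_rpow_const 0 (1 / 6) (Or.inr (by norm_num))
    have := hc.tendsto.comp h6
    rw [show (0 : ℝ) ^ ((1 : ℝ) / 6) = 0 from Real.zero_rpow (by norm_num)] at this
    exact this.congr fun n => hpow n
  refine ⟨hr0, ?_⟩
  -- n * r n ^ 6 → (√3)⁻¹
  set g : ℝ → ℝ := fun x => 3 * (1 + x ^ 2) ^ 3 / ((3 + x ^ 2) * Real.sqrt (3 + 4 * x ^ 2 + x ^ 4))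
    with hg
  have hgcont : ContinuousAt g 0 := by
    apply ContinuousAt.div
    · fun_prop
    · exact ((continuous_const.add (continuous_pow 2)).mul
        (Real.continuous_sqrt.comp (by continuity))).continuousAt
    · positivity
  have hg0 : g 0 = (Real.sqrt 3)⁻¹ := by
    have h3 : Real.sqrt (3 + 4 * (0:ℝ) ^ 2 + 0 ^ 4) = Real.sqrt 3 := by norm_num
    have hs : (0:ℝ) < Real.sqrt 3 := Real.sqrt_pos.mpr (by norm_num)
    simp only [hg, h3]
    rw [inv_eq_one_div, div_eq_div_iff (by positivity) (by positivity)]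
    ring
  have hN : Filter.Tendsto (fun n : ℕ => (n : ℝ) * r n ^ 6) Filter.atTop
      (nhds ((Real.sqrt 3)⁻¹)) := by
    rw [← hg0]
    apply (hgcont.tendsto.comp hr0).congr'
    filter_upwards [Filter.eventually_ge_atTop 1] with n hn
    have h := heq n hn
    have hD : (0 : ℝ) < (3 + r n ^ 2) * Real.sqrt (3 + 4 * r n ^ 2 + r n ^ 4) := by
      have := (hr n); have := hsq n; nlinarith
    show g (r n) = (n : ℝ) * r n ^ 6
    rw [hg]
    rw [div_eq_iff hD.ne']
    linear_combination -h
  -- conclude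
  have hc2 : ContinuousAt (fun x : ℝ => x ^ ((1 : ℝ) / 6)) ((Real.sqrt 3)⁻¹) :=
    Real.continuousAt_rpow_const _ _ (Or.inr (by norm_num))
  have hfin := hc2.tendsto.comp hN
  have hval : ((Real.sqrt 3)⁻¹) ^ ((1 : ℝ) / 6) = (3 : ℝ) ^ (-(1 : ℝ) / 12) := by
    have hinv : (Real.sqrt 3)⁻¹ = (3 : ℝ) ^ (-(1 : ℝ) / 2) := by
      rw [Real.sqrt_eq_rpow, ← Real.rpow_neg (by norm_num : (0:ℝ) ≤ 3)]
      norm_num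
    rw [hinv, ← Real.rpow_mul (by norm_num : (0:ℝ) ≤ 3)]
    norm_num
  rw [hval] at hfin
  apply hfin.congr'
  filter_upwards [Filter.eventually_ge_atTop 1] with n hn
  have hn0 : (0 : ℝ) ≤ (n : ℝ) := Nat.cast_nonneg n
  show ((n : ℝ) * r n ^ 6) ^ ((1 : ℝ) / 6) = (n : ℝ) ^ ((1 : ℝ) / 6) * r n
  rw [Real.mul_rpow hn0 (by positivity), hpow n]
end

section
/- In the all-Gaussian case the kernel sensitivity matrix is diagonal: with f(x) = φ(x;σ), K(x,y) = φ(y − x; h), τ² = σ² + h², P_k(x) = Hn_k(x,σ), Q_j(y) = Hn_j(y,τ), one has s_{jk} = ∫∫ K(x,y) Q_j(y) P_k(x) f(x) dy dx = δ_{jk} (σ/τ)^j = δ_{jk} (1 + h²/σ²)^{-j/2}. -/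
/-!
Write `H_v n` for the Hermite polynomials of variance `v`
(`H_v (n+1) = X H_v n - v H_v n'`), so that `Hn_k(·, s) = H_{s²} k / (s^k √k!)`.
Stein's identity `𝔼[(Y - x) p(Y)] = h² 𝔼[p'(Y)]` for `Y ~ N(x, h²)` together with the
three-term recurrence shows that Gaussian smoothing with variance `h²` maps `H_v n` to
`H_{v-h²} n`. Hence the inner integral is `(σ/τ)^j Hn_j(x, σ)`, and the outer one reduces to
the orthonormality of `Hn_·(·, σ)` against `φ(·; σ)`, which follows from Stein's identity at
`x = 0` by induction.
-/

/-- Physicists' Hermite polynomial `H_n(w) = (-1)^n e^{w²} (d/dw)^n e^{-w²}`. -/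
noncomputable def physHermite (n : ℕ) (w : ℝ) : ℝ :=
  (-1 : ℝ) ^ n * Real.exp (w ^ 2) * iteratedDeriv n (fun u => Real.exp (-u ^ 2)) w

/-- Scaled Hermite polynomials `Hn_k(x, σ)`, orthonormal for the `N(0, σ²)` weight. -/
noncomputable def hermiteNorm (k : ℕ) (σ x : ℝ) : ℝ :=
  physHermite k (x / (Real.sqrt 2 * σ)) / ((Real.sqrt 2) ^ k * Real.sqrt (Nat.factorial k))

/-- Density of a centered normal with standard deviation `s`. -/
noncomputable def gaussPdf (s z : ℝ) : ℝ :=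
  (1 / (s * Real.sqrt (2 * Real.pi))) * Real.exp (-z ^ 2 / (2 * s ^ 2))

open MeasureTheory Polynomial Real

lemma integrable_pow_mul_exp_neg_mul_sq {b : ℝ} (hb : 0 < b) (n : ℕ) :
    Integrable fun x : ℝ => x ^ n * exp (-b * x ^ 2) := by
  simpa [rpow_natCast] using
    integrable_rpow_mul_exp_neg_mul_sq hb (s := n) (by linarith [n.cast_nonneg (α := ℝ)])

lemma integrable_eval_mul_exp_neg_mul_sq {b : ℝ} (hb : 0 < b) (p : ℝ[X]) :
    Integrable fun x : ℝ => p.eval x * exp (-b * x ^ 2) := by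
  induction p using Polynomial.induction_on' with
  | add p q hp hq => simpa [add_mul] using hp.fun_add hq
  | monomial n a => simpa [mul_assoc] using (integrable_pow_mul_exp_neg_mul_sq hb n).const_mul a

lemma gaussPdf_eq_mul_exp (s z : ℝ) :
    gaussPdf s z = (s * √(2 * π))⁻¹ * exp (-(2 * s ^ 2)⁻¹ * z ^ 2) := by
  rw [gaussPdf, one_div]
  ring_nf

lemma integrable_gaussPdf_sub_mul_eval {s : ℝ} (hs : s ≠ 0) (x : ℝ) (p : ℝ[X]) :
    Integrable fun y : ℝ => gaussPdf s (y - x) * p.eval y := by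
  have h := ((integrable_eval_mul_exp_neg_mul_sq (b := (2 * s ^ 2)⁻¹) (by positivity)
    (p.comp (X + C x))).const_mul (s * √(2 * π))⁻¹).comp_sub_right x
  refine h.congr (.of_forall fun y => ?_)
  simp only [eval_comp, eval_add, eval_X, eval_C, sub_add_cancel, gaussPdf_eq_mul_exp]
  ring

lemma gaussPdf_eq_gaussianPDFReal {s : ℝ} (hs : 0 < s) (x y : ℝ) :
    gaussPdf s (y - x) = ProbabilityTheory.gaussianPDFReal x (s ^ 2).toNNReal y := by
  rw [gaussPdf, ProbabilityTheory.gaussianPDFReal, Real.coe_toNNReal _ (sq_nonneg s),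
    show 2 * π * s ^ 2 = s ^ 2 * (2 * π) by ring, sqrt_mul (sq_nonneg s), sqrt_sq hs.le, one_div]

lemma integral_gaussPdf_sub {s : ℝ} (hs : 0 < s) (x : ℝ) : ∫ y, gaussPdf s (y - x) = 1 := by
  simp_rw [gaussPdf_eq_gaussianPDFReal hs]
  exact ProbabilityTheory.integral_gaussianPDFReal_eq_one x (by simp [hs.ne'])

lemma hasDerivAt_gaussPdf (s z : ℝ) :
    HasDerivAt (gaussPdf s) (-(z / s ^ 2) * gaussPdf s z) z := by
  have h := (((hasDerivAt_pow 2 z).fun_neg.div_const (2 * s ^ 2)).exp).const_mul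
    (1 / (s * √(2 * π)))
  refine h.congr_deriv ?_
  rw [gaussPdf]
  rcases eq_or_ne s 0 with rfl | hs
  · simp
  · field_simp
    ring

/-- The heat semigroup on polynomials: `gaussSmooth s p x = 𝔼[p(x + Z)]` for `Z ~ N(0, s²)`. -/
noncomputable def gaussSmooth (s : ℝ) (p : ℝ[X]) (x : ℝ) : ℝ :=
  ∫ y, gaussPdf s (y - x) * p.eval y

section gaussSmooth

variable {s : ℝ} (x : ℝ)

lemma gaussSmooth_one (hs : 0 < s) : gaussSmooth s 1 x = 1 := by
  simpa [gaussSmooth] using integral_gaussPdf_sub hs x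

lemma gaussSmooth_C_mul (a : ℝ) (p : ℝ[X]) :
    gaussSmooth s (C a * p) x = a * gaussSmooth s p x := by
  simp only [gaussSmooth, eval_mul, eval_C, ← integral_const_mul]
  congr 1 with y
  ring

lemma gaussSmooth_add (hs : s ≠ 0) (p q : ℝ[X]) :
    gaussSmooth s (p + q) x = gaussSmooth s p x + gaussSmooth s q x := by
  simp only [gaussSmooth, eval_add, mul_add]
  exact integral_add (integrable_gaussPdf_sub_mul_eval hs x p)
    (integrable_gaussPdf_sub_mul_eval hs x q)

lemma gaussSmooth_sub (hs : s ≠ 0) (p q : ℝ[X]) :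
    gaussSmooth s (p - q) x = gaussSmooth s p x - gaussSmooth s q x := by
  simp only [gaussSmooth, eval_sub, mul_sub]
  exact integral_sub (integrable_gaussPdf_sub_mul_eval hs x p)
    (integrable_gaussPdf_sub_mul_eval hs x q)

/-- Stein's identity: integrate by parts against
`∂_y φ(y - x; s) = -((y - x) / s²) φ(y - x; s)`. -/
lemma gaussSmooth_X_sub_C_mul (hs : s ≠ 0) (p : ℝ[X]) :
    gaussSmooth s ((X - C x) * p) x = s ^ 2 * gaussSmooth s (derivative p) x := by
  have hint (q : ℝ[X]) := integrable_gaussPdf_sub_mul_eval hs x q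
  have hparts := integral_mul_deriv_eq_deriv_mul_of_integrable
    (u := fun y => p.eval y) (u' := fun y => (derivative p).eval y)
    (v := fun y => gaussPdf s (y - x)) (v' := fun y => -((y - x) / s ^ 2) * gaussPdf s (y - x))
    (fun y _ => p.hasDerivAt y) (fun y _ => (hasDerivAt_gaussPdf s (y - x)).comp_sub_const y x)
    (((hint ((X - C x) * p)).const_mul (-(s ^ 2)⁻¹)).congr (.of_forall fun y => by
      simp only [eval_mul, eval_sub, eval_X, eval_C, Pi.mul_apply]; ring))
    ((hint (derivative p)).congr (.of_forall fun y => by simp only [Pi.mul_apply]; ring))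
    ((hint p).congr (.of_forall fun y => by simp only [Pi.mul_apply]; ring))
  have hlhs : ∫ y, p.eval y * (-((y - x) / s ^ 2) * gaussPdf s (y - x))
      = -(s ^ 2)⁻¹ * gaussSmooth s ((X - C x) * p) x := by
    rw [gaussSmooth, ← integral_const_mul]
    congr 1 with y
    simp only [eval_mul, eval_sub, eval_X, eval_C]
    ring
  have hrhs :
      ∫ y, (derivative p).eval y * gaussPdf s (y - x) = gaussSmooth s (derivative p) x := by
    simp only [gaussSmooth, mul_comm]
  rw [hlhs, hrhs] at hparts
  field_simp at hparts ⊢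
  linarith

lemma gaussSmooth_X_mul (hs : s ≠ 0) (p : ℝ[X]) :
    gaussSmooth s (X * p) x = x * gaussSmooth s p x + s ^ 2 * gaussSmooth s (derivative p) x := by
  rw [show X * p = (X - C x) * p + C x * p by ring, gaussSmooth_add x hs,
    gaussSmooth_X_sub_C_mul x hs, gaussSmooth_C_mul]
  ring

end gaussSmooth

/-- Probabilists' Hermite polynomials of variance `v`: `√v ^ n * He_n (x / √v)` for `v > 0`,
the monomials for `v = 0`. -/
noncomputable def hermiteVar (v : ℝ) : ℕ → ℝ[X]
  | 0 => 1
  | n + 1 => X * hermiteVar v n - C v * derivative (hermiteVar v n)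

section hermiteVar

variable (v : ℝ)

@[simp] lemma hermiteVar_zero : hermiteVar v 0 = 1 := rfl

lemma hermiteVar_succ (n : ℕ) :
    hermiteVar v (n + 1) = X * hermiteVar v n - C v * derivative (hermiteVar v n) := rfl

@[simp] lemma hermiteVar_one : hermiteVar v 1 = X := by simp [hermiteVar_succ]

lemma derivative_hermiteVar_succ (n : ℕ) :
    derivative (hermiteVar v (n + 1)) = C ((n : ℝ) + 1) * hermiteVar v n := by
  induction n with
  | zero => simp
  | succ n ih =>
    rw [hermiteVar_succ v (n + 1), derivative_sub, derivative_mul, derivative_X, ih,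
      derivative_mul, derivative_C_mul, derivative_C, zero_mul, zero_add, hermiteVar_succ]
    push_cast
    simp only [C_add, C_1]
    ring

lemma hermiteVar_succ_succ (n : ℕ) :
    hermiteVar v (n + 2) = X * hermiteVar v (n + 1) - C (v * ((n : ℝ) + 1)) * hermiteVar v n := by
  rw [hermiteVar_succ v (n + 1), derivative_hermiteVar_succ, C_mul]
  ring

lemma hermiteVar_zero_var (n : ℕ) : hermiteVar 0 n = X ^ n := by
  induction n with
  | zero => rfl
  | succ n ih => rw [hermiteVar_succ, ih, C_0, zero_mul, sub_zero, pow_succ']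

lemma hermiteVar_sq_eq_comp {c : ℝ} (hc : c ≠ 0) (n : ℕ) :
    hermiteVar (c ^ 2) n
      = C (c ^ n) * ((hermite n).map (Int.castRingHom ℝ)).comp (C c⁻¹ * X) := by
  induction n with
  | zero => simp
  | succ n ih =>
    set P := (hermite n).map (Int.castRingHom ℝ)
    have hC : C (c ^ 2) * C (c ^ n) * C c⁻¹ = C (c ^ (n + 1)) := by
      rw [← C_mul, ← C_mul]; congr 1; field_simp; ring
    have hC' : C (c ^ (n + 1)) * C c⁻¹ = C (c ^ n) := by
      rw [← C_mul]; congr 1; field_simp; ring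
    rw [hermiteVar_succ, ih, hermite_succ, Polynomial.map_sub, Polynomial.map_mul, map_X,
      ← derivative_map, sub_comp, mul_comp, X_comp, derivative_C_mul, derivative_comp,
      derivative_C_mul_X]
    linear_combination
      (-(derivative P).comp (C c⁻¹ * X)) * hC - (X * P.comp (C c⁻¹ * X)) * hC'

end hermiteVar

theorem gaussSmooth_hermiteVar {h : ℝ} (hh : 0 < h) (v x : ℝ) (n : ℕ) :
    gaussSmooth h (hermiteVar v n) x = (hermiteVar (v - h ^ 2) n).eval x := by
  induction n using Nat.twoStepInduction with
  | zero => simpa using gaussSmooth_one x hh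
  | one =>
    rw [hermiteVar_one, ← mul_one X, gaussSmooth_X_mul x hh.ne', gaussSmooth_one x hh,
      derivative_one]
    simp [gaussSmooth]
  | more n ih₀ ih₁ =>
    rw [hermiteVar_succ_succ, gaussSmooth_sub x hh.ne', gaussSmooth_X_mul x hh.ne',
      gaussSmooth_C_mul, derivative_hermiteVar_succ, gaussSmooth_C_mul, ih₀, ih₁,
      hermiteVar_succ_succ]
    simp only [eval_sub, eval_mul, eval_X, eval_C]
    ring

theorem gaussSmooth_hermiteVar_mul_hermiteVar {s : ℝ} (hs : 0 < s) (j k : ℕ) :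
    gaussSmooth s (hermiteVar (s ^ 2) j * hermiteVar (s ^ 2) k) 0
      = if j = k then (j.factorial : ℝ) * (s ^ 2) ^ j else 0 := by
  induction j generalizing k with
  | zero =>
    -- at variance `s² - s² = 0` the Hermite polynomials are monomials, which vanish at `0`
    rw [hermiteVar_zero, one_mul, gaussSmooth_hermiteVar hs, sub_self, hermiteVar_zero_var]
    rcases k with _ | k <;> simp [eq_comm]
  | succ j ih =>
    have hstep : gaussSmooth s (hermiteVar (s ^ 2) (j + 1) * hermiteVar (s ^ 2) k) 0 =
        s ^ 2 * gaussSmooth s (hermiteVar (s ^ 2) j * derivative (hermiteVar (s ^ 2) k)) 0 := by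
      rw [hermiteVar_succ, sub_mul, mul_assoc, mul_assoc, gaussSmooth_sub 0 hs.ne',
        gaussSmooth_X_mul 0 hs.ne', gaussSmooth_C_mul, derivative_mul,
        gaussSmooth_add 0 hs.ne']
      ring
    rcases k with _ | k
    · rw [hstep]
      simp [gaussSmooth]
    · rw [hstep, derivative_hermiteVar_succ, mul_left_comm, gaussSmooth_C_mul, ih]
      simp only [add_left_inj, Nat.factorial_succ]
      split_ifs with hjk
      · subst hjk
        push_cast
        ring
      · ring

lemma eval_hermiteVar_sq {c : ℝ} (hc : c ≠ 0) (n : ℕ) (x : ℝ) :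
    (hermiteVar (c ^ 2) n).eval x = c ^ n * aeval (x / c) (hermite n) := by
  rw [hermiteVar_sq_eq_comp hc, eval_mul, eval_C, eval_comp, eval_mul, eval_C, eval_X,
    eval_map, aeval_def, algebraMap_int_eq, inv_mul_eq_div]

lemma physHermite_eq_aeval_hermite (n : ℕ) (w : ℝ) :
    physHermite n w = √2 ^ n * aeval (√2 * w) (hermite n) := by
  have hsq : (√2 * w) ^ 2 / 2 = w ^ 2 := by
    rw [mul_pow, sq_sqrt zero_le_two]; ring
  have hgauss : (fun u : ℝ => exp (-u ^ 2)) = fun u => exp (-((√2 * u) ^ 2 / 2)) := by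
    simp only [mul_pow, sq_sqrt zero_le_two]; ring_nf
  have hsmooth : ContDiff ℝ n fun u : ℝ => exp (-(u ^ 2 / 2)) := by fun_prop
  rw [physHermite, hgauss, iteratedDeriv_comp_const_mul hsmooth, iteratedDeriv_eq_iterate]
  beta_reduce
  rw [deriv_gaussian_eq_hermite_mul_gaussian, hsq, exp_neg]
  field_simp
  rw [← pow_mul, pow_mul', neg_one_sq, one_pow, one_mul]

lemma hermiteNorm_eq_eval_hermiteVar {s : ℝ} (hs : s ≠ 0) (k : ℕ) (x : ℝ) :
    hermiteNorm k s x = (hermiteVar (s ^ 2) k).eval x / (s ^ k * √(k.factorial)) := by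
  rw [hermiteNorm, physHermite_eq_aeval_hermite, eval_hermiteVar_sq hs,
    show √2 * (x / (√2 * s)) = x / s by field_simp]
  field_simp

theorem integral_gaussPdf_sub_mul_hermiteNorm {σ h τ : ℝ} (hσ : σ ≠ 0) (hh : 0 < h)
    (hτ : τ ≠ 0) (hτ2 : τ ^ 2 = σ ^ 2 + h ^ 2) (j : ℕ) (x : ℝ) :
    ∫ y, gaussPdf h (y - x) * hermiteNorm j τ y = (σ / τ) ^ j * hermiteNorm j σ x := by
  have hsmooth : gaussSmooth h (hermiteVar (τ ^ 2) j) x = (hermiteVar (σ ^ 2) j).eval x := by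
    rw [gaussSmooth_hermiteVar hh, hτ2, add_sub_cancel_right]
  calc ∫ y, gaussPdf h (y - x) * hermiteNorm j τ y
      = gaussSmooth h (hermiteVar (τ ^ 2) j) x / (τ ^ j * √(j.factorial)) := by
        simp_rw [hermiteNorm_eq_eval_hermiteVar hτ, mul_div_assoc', integral_div, gaussSmooth]
    _ = (σ / τ) ^ j * hermiteNorm j σ x := by
        rw [hsmooth, hermiteNorm_eq_eval_hermiteVar hσ, div_pow]
        field_simp

theorem integral_hermiteNorm_mul_hermiteNorm_mul_gaussPdf {σ : ℝ} (hσ : 0 < σ) (j k : ℕ) :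
    ∫ x, hermiteNorm j σ x * hermiteNorm k σ x * gaussPdf σ x = if j = k then 1 else 0 := by
  have horth := gaussSmooth_hermiteVar_mul_hermiteVar hσ j k
  simp only [gaussSmooth, sub_zero, eval_mul] at horth
  calc ∫ x, hermiteNorm j σ x * hermiteNorm k σ x * gaussPdf σ x
      = (∫ x, gaussPdf σ x * ((hermiteVar (σ ^ 2) j).eval x * (hermiteVar (σ ^ 2) k).eval x))
          / (σ ^ j * √(j.factorial) * (σ ^ k * √(k.factorial))) := by
        rw [← integral_div]
        congr 1 with x
        rw [hermiteNorm_eq_eval_hermiteVar hσ.ne', hermiteNorm_eq_eval_hermiteVar hσ.ne']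
        ring
    _ = if j = k then 1 else 0 := by
        rw [horth]
        split_ifs with hjk
        · subst hjk
          field_simp
          rw [sq_sqrt (by positivity)]
          ring
        · exact zero_div _

lemma div_pow_eq_one_add_div_sq_rpow {σ h τ : ℝ} (hσ : 0 < σ) (hτ : 0 < τ)
    (hτ2 : τ ^ 2 = σ ^ 2 + h ^ 2) (j : ℕ) :
    (σ / τ) ^ j = (1 + h ^ 2 / σ ^ 2) ^ (-(j : ℝ) / 2) := by
  have hratio : 1 + h ^ 2 / σ ^ 2 = (τ / σ) ^ (2 : ℝ) := by
    rw [rpow_two, div_pow, hτ2]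
    field_simp
  rw [hratio, ← rpow_mul (by positivity), mul_div_cancel₀ _ two_ne_zero,
    rpow_neg (by positivity), ← inv_rpow (by positivity), inv_div, rpow_natCast]

theorem gaussian_sensitivity_diagonal (σ h τ : ℝ) (hσ : 0 < σ) (hh : 0 < h)
    (hτ : τ = Real.sqrt (σ ^ 2 + h ^ 2)) (j k : ℕ) :
    (∫ x : ℝ, (∫ y : ℝ, gaussPdf h (y - x) * hermiteNorm j τ y)
        * hermiteNorm k σ x * gaussPdf σ x)
      = (if j = k then (σ / τ) ^ j else 0) ∧
    (σ / τ) ^ j = (1 + h ^ 2 / σ ^ 2) ^ (-(j : ℝ) / 2) := by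
  have hτpos : 0 < τ := hτ ▸ sqrt_pos.2 (by positivity)
  have hτ2 : τ ^ 2 = σ ^ 2 + h ^ 2 := hτ ▸ sq_sqrt (by positivity)
  refine ⟨?_, div_pow_eq_one_add_div_sq_rpow hσ hτpos hτ2 j⟩
  simp_rw [integral_gaussPdf_sub_mul_hermiteNorm hσ.ne' hh hτpos.ne' hτ2, mul_assoc,
    integral_const_mul, ← mul_assoc, integral_hermiteNorm_mul_hermiteNorm_mul_gaussPdf hσ]
  split_ifs <;> simp
end
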